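/- Let Q be a positive definite quadratic form on ℝ^{d-1} with matrix A, and let c ≥ 0. Let g : (0, ε₀) → [0, ∞) satisfy g(ε)/ε → c, and define the caps C_ε = {(x', x_d) : -g(ε) + Q(x') ≤ x_d ≤ 0} ⊂ ℝ^d. Then vol_d(C_ε)/ε^{(d+1)/2} → (2/(d+1)) · κ_{d-1} · c^{(d+1)/2} / √(det A) as ε → 0⁺. -/

import Mathlib

open MeasureTheory Filter Topology Set Metric
open scoped Matrix MatrixOrder

/-!
Writing the positive definite matrix as `A = Bᵀ B`, the sublevel set `{Q ≤ u}` is the preimage of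
the ball of radius `√u` under `B`, so its volume is `κ u^{n/2} / √(det A)` with `n = d - 1`.
Slicing the cap horizontally, the slice at height `t ∈ [-g, 0]` is `{Q ≤ t + g}`, hence
`vol C_ε = ∫₀^{g(ε)} κ u^{n/2} / √(det A) du = κ g(ε)^{(d+1)/2} / ((d+1)/2) / √(det A)` exactly,
and the limit follows from `g(ε)/ε → c`.
-/

lemma MeasureTheory.Measure.addHaar_setOf_norm_sq_le {E : Type*} [NormedAddCommGroup E]
    [NormedSpace ℝ E] [MeasurableSpace E] [BorelSpace E] [FiniteDimensional ℝ E]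
    (μ : Measure E) [μ.IsAddHaarMeasure] {T : E →ₗ[ℝ] E} (hT : LinearMap.det T ≠ 0)
    {u : ℝ} (hu : 0 ≤ u) :
    μ {x | ‖T x‖ ^ 2 ≤ u} =
      ENNReal.ofReal (√u ^ Module.finrank ℝ E / |LinearMap.det T|) * μ (closedBall 0 1) := by
  have hball : {x | ‖T x‖ ^ 2 ≤ u} = T ⁻¹' closedBall 0 √u := by
    ext x
    simp [Real.le_sqrt (norm_nonneg _) hu]
  rw [hball, addHaar_preimage_linearMap μ hT, addHaar_closedBall' μ 0 (Real.sqrt_nonneg u),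
    ← mul_assoc, ← ENNReal.ofReal_mul (abs_nonneg _), abs_inv, inv_mul_eq_div]

lemma lintegral_Icc_ofReal_rpow {r : ℝ} (hr : -1 < r) {s : ℝ} (hs : 0 ≤ s) :
    ∫⁻ u in Icc 0 s, ENNReal.ofReal (u ^ r) = ENNReal.ofReal (s ^ (r + 1) / (r + 1)) := by
  have hint : IntegrableOn (fun u : ℝ => u ^ r) (Icc 0 s) :=
    (integrableOn_Icc_iff_integrableOn_Ioc).2 (intervalIntegral.intervalIntegrable_rpow' hr).1
  have hnonneg : 0 ≤ᵐ[volume.restrict (Icc 0 s)] fun u : ℝ => u ^ r :=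
    ae_restrict_of_forall_mem measurableSet_Icc fun u hu => Real.rpow_nonneg hu.1 r
  rw [← ofReal_integral_eq_lintegral_ofReal hint hnonneg, integral_Icc_eq_integral_Ioc,
    ← intervalIntegral.integral_of_le hs, integral_rpow (.inl hr),
    Real.zero_rpow (by linarith), sub_zero]

lemma MeasureTheory.Measure.prod_volume_setOf_neg_add_le_and_nonpos {α : Type*} [MeasurableSpace α]
    (μ : Measure α) [SFinite μ] {f : α → ℝ} (hf : Measurable f) (s : ℝ) :
    μ.prod volume {p : α × ℝ | -s + f p.1 ≤ p.2 ∧ p.2 ≤ 0} = ∫⁻ u in Iic s, μ {x | f x ≤ u} := by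
  have hmeas : MeasurableSet {p : α × ℝ | -s + f p.1 ≤ p.2 ∧ p.2 ≤ 0} :=
    (measurableSet_le ((hf.comp measurable_fst).const_add _) measurable_snd).inter
      (measurableSet_le measurable_snd measurable_const)
  have hslice : ∀ t : ℝ, μ ((fun x => (x, t)) ⁻¹' {p : α × ℝ | -s + f p.1 ≤ p.2 ∧ p.2 ≤ 0}) =
      (Iic s).indicator (fun u => μ {x | f x ≤ u}) (t + s) := by
    intro t
    by_cases ht : t ≤ 0
    · rw [indicator_of_mem (by simpa using ht)]
      congr 1
      ext x
      simp only [mem_preimage, mem_ofPred_eq, ht, and_true]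
      constructor <;> intro h <;> linarith
    · rw [indicator_of_notMem (by simpa using ht)]
      convert measure_empty (μ := μ)
      ext x
      simp only [mem_preimage, mem_ofPred_eq, mem_empty_iff_false, iff_false, not_and]
      intro _
      linarith
  rw [Measure.prod_apply_symm hmeas, lintegral_congr hslice,
    lintegral_add_right_eq_self (f := (Iic s).indicator fun u => μ {x | f x ≤ u}),
    lintegral_indicator measurableSet_Iic]

lemma Matrix.sum_mul_eq_dotProduct_mulVec {ι R : Type*} [Fintype ι] [CommSemiring R]
    (A : Matrix ι ι R) (v : ι → R) :
    ∑ i, ∑ j, A i j * v i * v j = v ⬝ᵥ A *ᵥ v := by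
  simp only [dotProduct, mulVec, Finset.mul_sum]
  exact Finset.sum_congr rfl fun i _ => Finset.sum_congr rfl fun j _ => by ring

section PositiveDefinite

variable {ι : Type*} [Fintype ι]

lemma Matrix.IsSymm.posDef_of_sum_mul_pos {A : Matrix ι ι ℝ} (hA : A.IsSymm)
    (hpos : ∀ x : EuclideanSpace ℝ ι, x ≠ 0 → 0 < ∑ i, ∑ j, A i j * x i * x j) : A.PosDef := by
  refine posDef_iff_dotProduct_mulVec.2 ⟨by simpa [IsHermitian, IsSymm] using hA, fun v hv => ?_⟩
  simpa [sum_mul_eq_dotProduct_mulVec] using hpos (WithLp.toLp 2 v) (by simpa using hv)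

lemma Matrix.PosDef.sum_mul_nonneg {A : Matrix ι ι ℝ} (hA : A.PosDef) (x : EuclideanSpace ℝ ι) :
    0 ≤ ∑ i, ∑ j, A i j * x i * x j := by
  simpa [sum_mul_eq_dotProduct_mulVec] using hA.posSemidef.dotProduct_mulVec_nonneg x.ofLp

variable [DecidableEq ι]

lemma Matrix.norm_toEuclideanLin_sq (B : Matrix ι ι ℝ) (x : EuclideanSpace ℝ ι) :
    ‖toEuclideanLin B x‖ ^ 2 = x.ofLp ⬝ᵥ (Bᵀ * B) *ᵥ x.ofLp := by
  rw [← real_inner_self_eq_norm_sq, EuclideanSpace.inner_eq_star_dotProduct, toLpLin_apply,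
    ← mulVec_mulVec, dotProduct_mulVec, vecMul_transpose]
  simp

lemma Matrix.PosDef.volume_setOf_sum_mul_le {A : Matrix ι ι ℝ} (hA : A.PosDef) {u : ℝ}
    (hu : 0 ≤ u) :
    volume {x : EuclideanSpace ℝ ι | ∑ i, ∑ j, A i j * x i * x j ≤ u} =
      ENNReal.ofReal (√u ^ Fintype.card ι / √A.det) *
        volume (closedBall (0 : EuclideanSpace ℝ ι) 1) := by
  obtain ⟨B, rfl⟩ := CStarAlgebra.nonneg_iff_eq_star_mul_self.mp hA.posSemidef.nonneg
  have hB : LinearMap.det (toEuclideanLin B) ≠ 0 := by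
    rw [LinearMap.det_toLpLin]
    exact fun h => hA.det_pos.ne' (by simp [det_mul, h])
  simp_rw [sum_mul_eq_dotProduct_mulVec, star_eq_conjTranspose,
    conjTranspose_eq_transpose_of_trivial, ← norm_toEuclideanLin_sq]
  rw [Measure.addHaar_setOf_norm_sq_le volume hB hu, LinearMap.det_toLpLin,
    finrank_euclideanSpace, det_mul, det_transpose, ← sq, Real.sqrt_sq_eq_abs]

theorem Matrix.PosDef.volume_setOf_neg_add_le_and_nonpos {A : Matrix ι ι ℝ} (hA : A.PosDef) {s : ℝ}
    (hs : 0 ≤ s) :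
    volume {p : EuclideanSpace ℝ ι × ℝ | -s + ∑ i, ∑ j, A i j * p.1 i * p.1 j ≤ p.2 ∧ p.2 ≤ 0} =
      ENNReal.ofReal (s ^ ((Fintype.card ι + 2) / 2 : ℝ) / ((Fintype.card ι + 2) / 2) / √A.det) *
        volume (closedBall (0 : EuclideanSpace ℝ ι) 1) := by
  set K := volume (closedBall (0 : EuclideanSpace ℝ ι) 1)
  set n : ℝ := (Fintype.card ι : ℝ)
  have hQ : Measurable fun x : EuclideanSpace ℝ ι => ∑ i, ∑ j, A i j * x i * x j := by fun_prop
  have hneg : ∀ u < 0, volume {x : EuclideanSpace ℝ ι | ∑ i, ∑ j, A i j * x i * x j ≤ u} = 0 :=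
    fun u hu => by
      convert measure_empty (μ := (volume : Measure (EuclideanSpace ℝ ι)))
      exact eq_empty_of_forall_notMem fun x hx => (hx.trans_lt hu).not_ge (hA.sum_mul_nonneg x)
  have hpos : ∀ u ∈ Icc 0 s,
      volume {x : EuclideanSpace ℝ ι | ∑ i, ∑ j, A i j * x i * x j ≤ u} =
        ENNReal.ofReal (u ^ (n / 2)) * (ENNReal.ofReal (√A.det)⁻¹ * K) := fun u hu => by
    rw [hA.volume_setOf_sum_mul_le hu.1, Real.sqrt_eq_rpow, ← Real.rpow_mul_natCast hu.1,
      div_eq_mul_inv, ENNReal.ofReal_mul (Real.rpow_nonneg hu.1 _), one_div_mul_eq_div, mul_assoc]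
  rw [Measure.volume_eq_prod, Measure.prod_volume_setOf_neg_add_le_and_nonpos volume hQ,
    ← Iio_union_Icc_eq_Iic hs,
    lintegral_union measurableSet_Icc ((Iio_disjoint_Ici le_rfl).mono_right Icc_subset_Ici_self),
    setLIntegral_congr_fun measurableSet_Iio hneg, lintegral_zero, zero_add,
    setLIntegral_congr_fun measurableSet_Icc hpos, lintegral_mul_const _ (by fun_prop),
    lintegral_Icc_ofReal_rpow (by linarith [(Fintype.card ι).cast_nonneg (α := ℝ)]) hs,
    show n / 2 + 1 = (n + 2) / 2 by ring, ← mul_assoc,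
    ← ENNReal.ofReal_mul (div_nonneg (Real.rpow_nonneg hs _) (by positivity)),
    div_eq_mul_inv _ √A.det]

end PositiveDefinite

theorem stmt_18_general (d : ℕ) (hd : 2 ≤ d)
    (A : Matrix (Fin (d - 1)) (Fin (d - 1)) ℝ) (hA : A.IsSymm)
    (Q : EuclideanSpace ℝ (Fin (d - 1)) → ℝ)
    (hQ : ∀ x, Q x = ∑ i, ∑ j, A i j * x i * x j)
    (hpd : ∀ x : EuclideanSpace ℝ (Fin (d - 1)), x ≠ 0 → 0 < Q x)
    (c : ℝ)
    (ε₀ : ℝ) (hε₀ : 0 < ε₀) (g : ℝ → ℝ)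
    (hgnn : ∀ ε ∈ Set.Ioo 0 ε₀, 0 ≤ g ε)
    (hg : Tendsto (fun ε => g ε / ε) (𝓝[>] 0) (𝓝 c))
    (C : ℝ → Set (EuclideanSpace ℝ (Fin (d - 1)) × ℝ))
    (hC : ∀ ε, C ε = {p | -g ε + Q p.1 ≤ p.2 ∧ p.2 ≤ 0}) :
    Tendsto (fun ε => (volume (C ε)).toReal / ε ^ ((d + 1 : ℝ) / 2)) (𝓝[>] 0)
      (𝓝 ((2 / (d + 1 : ℝ)) *
        (volume (Metric.closedBall (0 : EuclideanSpace ℝ (Fin (d - 1))) 1)).toReal *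
        c ^ ((d + 1 : ℝ) / 2) / Real.sqrt A.det)) := by
  have hApd : A.PosDef := hA.posDef_of_sum_mul_pos fun x hx => hQ x ▸ hpd x hx
  have hdim : ((Fintype.card (Fin (d - 1)) : ℝ) + 2) / 2 = (d + 1) / 2 := by
    rw [Fintype.card_fin, Nat.cast_sub (by omega)]
    ring
  have hvol : ∀ ε ∈ Ioo 0 ε₀, (volume (C ε)).toReal / ε ^ ((d + 1 : ℝ) / 2) =
      2 / (d + 1) * (volume (closedBall (0 : EuclideanSpace ℝ (Fin (d - 1))) 1)).toReal *
        (g ε / ε) ^ ((d + 1 : ℝ) / 2) / √A.det := by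
    intro ε hε
    have hgε := hgnn ε hε
    simp_rw [hC, hQ]
    rw [hApd.volume_setOf_neg_add_le_and_nonpos hgε, hdim, ENNReal.toReal_mul,
      ENNReal.toReal_ofReal (by positivity), Real.div_rpow hgε hε.1.le]
    field_simp
  refine Tendsto.congr' (eventuallyEq_of_mem (Ioo_mem_nhdsGT hε₀) fun ε hε => (hvol ε hε).symm) ?_
  exact ((hg.rpow_const (.inr (by positivity))).const_mul _).div_const _

theorem stmt_18 (d : ℕ) (hd : 2 ≤ d)
    (A : Matrix (Fin (d - 1)) (Fin (d - 1)) ℝ) (hA : A.IsSymm)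
    (Q : EuclideanSpace ℝ (Fin (d - 1)) → ℝ)
    (hQ : ∀ x, Q x = ∑ i, ∑ j, A i j * x i * x j)
    (hpd : ∀ x : EuclideanSpace ℝ (Fin (d - 1)), x ≠ 0 → 0 < Q x)
    (c : ℝ) (hc : 0 ≤ c)
    (ε₀ : ℝ) (hε₀ : 0 < ε₀) (g : ℝ → ℝ)
    (hgnn : ∀ ε ∈ Set.Ioo 0 ε₀, 0 ≤ g ε)
    (hg : Tendsto (fun ε => g ε / ε) (𝓝[>] 0) (𝓝 c))
    (C : ℝ → Set (EuclideanSpace ℝ (Fin (d - 1)) × ℝ))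
    (hC : ∀ ε, C ε = {p | -g ε + Q p.1 ≤ p.2 ∧ p.2 ≤ 0}) :
    Tendsto (fun ε => (volume (C ε)).toReal / ε ^ ((d + 1 : ℝ) / 2)) (𝓝[>] 0)
      (𝓝 ((2 / (d + 1 : ℝ)) *
        (volume (Metric.closedBall (0 : EuclideanSpace ℝ (Fin (d - 1))) 1)).toReal *
        c ^ ((d + 1 : ℝ) / 2) / Real.sqrt A.det)) :=
  stmt_18_general d hd A hA Q hQ hpd c ε₀ hε₀ g hgnn hg C hC
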